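/- arXiv:2602.01346 — 2 statements merged into one kernel-verified Lean document; each statement's English description precedes it below -/
import Mathlib

section
/- (Tail Mass Bound.) Let u ∈ ℝ^d with sorted entries u_(1) ≥ … ≥ u_(d), let 1 ≤ k < d, and suppose the gap Δ_k = u_(k) − u_(k+1) is strictly positive. Let S = S_k(u) be the salient set and let α be the softmax of ηu for η > 0. Then the tail mass satisfies t = Σ_{i ∉ S} α_i ≤ ((d − k)/k) · exp(−η Δ_k). -/
/-!
The softmax normalizer `Z = ∑ⱼ exp (η uⱼ)` is at least `|S| exp (η u_(k))`, since every salient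
index has `uᵢ ≥ u_(k)`, and `|S| ≥ k`. Each of the at most `d - k` indices outside `S` lies
strictly below `u_(k)`, hence at or below `u_(k+1)`, so the tail numerator is at most
`(d - k) exp (η u_(k+1))`. Dividing gives the bound.
-/

open Finset Real

theorem sub_div_le_sub_div_of_le {c x y : ℝ} (hx : 0 < x) (hxy : x ≤ y) (hc : 0 ≤ c) :
    (c - y) / y ≤ (c - x) / x := by
  rw [div_le_div_iff₀ (hx.trans_le hxy) hx]
  nlinarith

theorem sum_compl_exp_div_sum_exp_le {ι : Type*} [Fintype ι] [DecidableEq ι] (u : ι → ℝ)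
    {η a b : ℝ} (hη : 0 ≤ η) {S : Finset ι} (hS : S.Nonempty)
    (ha : ∀ i ∈ S, a ≤ u i) (hb : ∀ i ∉ S, u i ≤ b) :
    ∑ i ∈ Sᶜ, exp (η * u i) / ∑ j, exp (η * u j) ≤
      (#Sᶜ / #S : ℝ) * exp (-η * (a - b)) := by
  have head : #S * exp (η * a) ≤ ∑ j, exp (η * u j) := calc
    #S * exp (η * a) ≤ ∑ i ∈ S, exp (η * u i) := by
      simpa using S.card_nsmul_le_sum _ _ fun i hi =>
        exp_le_exp.2 (mul_le_mul_of_nonneg_left (ha i hi) hη)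
    _ ≤ ∑ j, exp (η * u j) := sum_le_univ_sum_of_nonneg fun _ => (exp_pos _).le
  have tail : ∑ i ∈ Sᶜ, exp (η * u i) ≤ #Sᶜ * exp (η * b) := by
    simpa using Sᶜ.sum_le_card_nsmul _ _ fun i hi =>
      exp_le_exp.2 (mul_le_mul_of_nonneg_left (hb i (mem_compl.1 hi)) hη)
  rw [← sum_div]
  calc (∑ i ∈ Sᶜ, exp (η * u i)) / ∑ j, exp (η * u j)
      ≤ #Sᶜ * exp (η * b) / (#S * exp (η * a)) :=
        div_le_div₀ (by positivity) tail (by positivity) head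
    _ = (#Sᶜ / #S : ℝ) * exp (-η * (a - b)) := by
        rw [show -η * (a - b) = η * b - η * a by ring, exp_sub]
        field_simp

section SortedRearrangement

variable {d : ℕ} {u v : Fin d → ℝ} {e : Equiv.Perm (Fin d)}

theorem le_card_filter_le_of_antitone (hv : ∀ i, v i = u (e i)) (hanti : Antitone v)
    (m : Fin d) : (m : ℕ) + 1 ≤ #{i | v m ≤ u i} := by
  rw [← Fin.card_Iic, ← card_map e.toEmbedding]
  refine card_le_card fun i hi => ?_
  obtain ⟨j, hj, rfl⟩ := mem_map.1 hi
  simpa [← hv] using hanti (mem_Iic.1 hj)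

theorem le_of_lt_of_antitone_of_covBy (hv : ∀ i, v i = u (e i)) (hanti : Antitone v)
    {m n : Fin d} (hmn : m ⋖ n) {i : Fin d} (hi : u i < v m) : u i ≤ v n := by
  have hui : u i = v (e.symm i) := by rw [hv, Equiv.apply_symm_apply]
  rw [hui] at hi ⊢
  exact hanti (not_lt.1 fun hlt => hi.not_ge (hanti (hmn.le_of_lt hlt)))

end SortedRearrangement

/-- **Tail Mass Bound.** Let `u ∈ ℝ^d` with decreasingly sorted
entries given by `v` (a rearrangement of `u` along a permutation `e`), let
`1 ≤ k < d` with gap `Δ_k = u_(k) − u_(k+1) > 0`, let `S = S_k(u)` be the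
salient set and `α` the softmax of `ηu` for `η > 0`. Then the tail mass
satisfies `t = ∑_{i ∉ S} α_i ≤ ((d − k)/k) · exp(−η Δ_k)`. -/
theorem softmax_tail_mass_bound (d k : ℕ) (hk1 : 1 ≤ k) (hkd : k < d)
    (u v : Fin d → ℝ) (e : Equiv.Perm (Fin d))
    (hv : ∀ i, v i = u (e i))
    (hsorted : ∀ i j : Fin d, i ≤ j → v j ≤ v i)
    (η : ℝ) (hη : 0 < η)
    (α : Fin d → ℝ)
    (hα : ∀ i, α i = Real.exp (η * u i) / ∑ j, Real.exp (η * u j)) :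
    ∑ i ∈ Finset.univ \ Finset.univ.filter (fun i => v ⟨k - 1, by omega⟩ ≤ u i),
        α i ≤
      (((d : ℝ) - k) / k) *
        Real.exp (-η * (v ⟨k - 1, by omega⟩ - v ⟨k, hkd⟩)) := by
  set S : Finset (Fin d) := {i | v ⟨k - 1, by omega⟩ ≤ u i}
  have hkS : k ≤ #S := by
    have : k - 1 + 1 ≤ #S := le_card_filter_le_of_antitone hv hsorted ⟨k - 1, by omega⟩
    omega
  have hcov : (⟨k - 1, by omega⟩ : Fin d) ⋖ ⟨k, hkd⟩ := by
    rw [Fin.covBy_iff, Nat.covBy_iff_add_one_eq]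
    exact Nat.sub_add_cancel hk1
  have hbound := sum_compl_exp_div_sum_exp_le u hη.le (S := S) (card_pos.1 (by omega))
    (fun i hi => (mem_filter.1 hi).2)
    (fun i hi => le_of_lt_of_antitone_of_covBy hv hsorted hcov (not_le.1 (by simpa [S] using hi)))
  rw [← compl_eq_univ_sdiff]
  simp_rw [hα]
  refine hbound.trans (mul_le_mul_of_nonneg_right ?_ (exp_pos _).le)
  rw [card_compl, Fintype.card_fin, Nat.cast_sub (card_le_univ S |>.trans_eq (Fintype.card_fin d))]
  exact sub_div_le_sub_div_of_le (by exact_mod_cast hk1) (by exact_mod_cast hkS) d.cast_nonneg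
end

section
/- (Completeness of layer conductance.) Let h : ℝ^n → ℝ^m and G : ℝ^m → ℝ be continuously differentiable, and set F = G ∘ h. Fix x, x' ∈ ℝ^n and let γ(α) = x' + α(x − x') for α ∈ [0,1]. Then Σ_{j=1}^m ∫_0^1 (∂G/∂y_j)(h(γ(α))) · (d/dα)[h_j(γ(α))] dα = F(x) − F(x'); that is, the block conductances sum to the total change of the output along the straight-line path from the baseline x' to the input x. -/
open Finset Real MeasureTheory intervalIntegral

/-!
Along any C¹ path `g`, the block integrands `∂_j G(g t) · (g_j)'(t)` sum to
`DG(g t) (g' t) = (G ∘ g)'(t)` by the chain rule, so the fundamental theorem of calculus turns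
the sum of the block conductances into `G (g 1) - G (g 0)`. The straight-line path is just one
such path.
-/

theorem LinearMap.apply_eq_sum_apply_single_mul {R ι : Type*} [CommSemiring R] [Fintype ι]
    [DecidableEq ι] (L : (ι → R) →ₗ[R] R) (v : ι → R) :
    L v = ∑ j, L (Pi.single j 1) * v j := by
  conv_lhs => rw [pi_eq_sum_univ' v, map_sum]
  simp only [map_smul, smul_eq_mul, mul_comm]

theorem integral_fderiv_apply_deriv_eq_sub {E F : Type*} [NormedAddCommGroup E] [NormedSpace ℝ E]
    [NormedAddCommGroup F] [NormedSpace ℝ F] [CompleteSpace F] {G : E → F} {g : ℝ → E}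
    (hG : ContDiff ℝ 1 G) (hg : ContDiff ℝ 1 g) (a b : ℝ) :
    ∫ t in a..b, fderiv ℝ G (g t) (deriv g t) = G (g b) - G (g a) := by
  have hG' : Differentiable ℝ G := hG.differentiable one_ne_zero
  have hg' : Differentiable ℝ g := hg.differentiable one_ne_zero
  refine integral_eq_sub_of_hasDerivAt
    (fun t _ => (hG' (g t)).hasFDerivAt.comp_hasDerivAt t (hg' t).hasDerivAt) ?_
  exact (((hG.continuous_fderiv one_ne_zero).comp hg.continuous).clm_apply
    (hg.continuous_deriv le_rfl)).intervalIntegrable a b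

theorem sum_integral_partial_mul_deriv_eq_sub {ι : Type*} [Fintype ι] [DecidableEq ι]
    {G : (ι → ℝ) → ℝ} {g : ℝ → ι → ℝ} (hG : ContDiff ℝ 1 G) (hg : ContDiff ℝ 1 g) (a b : ℝ) :
    ∑ j, ∫ t in a..b, fderiv ℝ G (g t) (Pi.single j 1) * deriv (fun s => g s j) t =
      G (g b) - G (g a) := by
  have hg' : Differentiable ℝ g := hg.differentiable one_ne_zero
  have deriv_coord : ∀ j t, deriv (fun s => g s j) t = deriv g t j := fun j t =>
    (hasDerivAt_pi.1 (hg' t).hasDerivAt j).deriv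
  have integrable : ∀ j, IntervalIntegrable
      (fun t => fderiv ℝ G (g t) (Pi.single j 1) * deriv g t j) volume a b := fun j =>
    ((((hG.continuous_fderiv one_ne_zero).comp hg.continuous).clm_apply continuous_const).mul
      ((continuous_apply j).comp (hg.continuous_deriv le_rfl))).intervalIntegrable a b
  simp_rw [deriv_coord]
  rw [← integral_finsetSum fun j _ => integrable j, ← integral_fderiv_apply_deriv_eq_sub hG hg]
  congr with t
  exact ((fderiv ℝ G (g t)).toLinearMap.apply_eq_sum_apply_single_mul _).symm

/-- **Completeness of layer conductance.** For continuously
differentiable `h : ℝ^n → ℝ^m` and `G : ℝ^m → ℝ` with `F = G ∘ h`, input `x`,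
baseline `x'`, and straight-line path `γ(α) = x' + α(x − x')`, the block
conductances `∫_0^1 (∂G/∂y_j)(h(γ(α))) · (d/dα)[h_j(γ(α))] dα` sum over `j`
to `F(x) − F(x')`. -/
theorem layer_conductance_completeness (n m : ℕ)
    (h : (Fin n → ℝ) → (Fin m → ℝ)) (G : (Fin m → ℝ) → ℝ)
    (hh : ContDiff ℝ 1 h) (hG : ContDiff ℝ 1 G)
    (x x' : Fin n → ℝ) :
    ∑ j : Fin m, ∫ α in (0:ℝ)..1,
        (fderiv ℝ G (h (x' + α • (x - x')))) (Pi.single j 1) *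
          deriv (fun a : ℝ => h (x' + a • (x - x')) j) α =
      G (h x) - G (h x') := by
  have path : ContDiff ℝ 1 fun a : ℝ => h (x' + a • (x - x')) := hh.comp (by fun_prop)
  simpa using sum_integral_partial_mul_deriv_eq_sub hG path 0 1
end
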